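/- arXiv:2309.13074 — 11 statements merged into one kernel-verified Lean document; each statement's English description precedes it below -/
import Mathlib

section
/- For every integer j, G_j^4 − G_{j−2}·G_{j−1}·G_{j+1}·G_{j+2} = λ², i.e. the Gelin–Cesàro identity holds for every gibonacci sequence. -/
/-!
Writing `G (j + 1)` and `G (j + 2)` in terms of `G (j - 2)` and `G (j - 1)` turns
`G j ^ 4 - G (j - 2) * G (j - 1) * G (j + 1) * G (j + 2)` into the square of the Cassini defect
`G j ^ 2 - G (j - 1) * G (j + 1)`, and the recurrence makes this defect change sign at each step,
so its square does not depend on `j`.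
-/

namespace Gibonacci

variable {R : Type*} [CommRing R] {G : ℤ → R}

def cassini (G : ℤ → R) (k : ℤ) : R := G (k + 1) ^ 2 - G k * G (k + 2)

theorem cassini_antiperiodic (hG : ∀ k : ℤ, G (k + 2) = G (k + 1) + G k) :
    Function.Antiperiodic (cassini G) 1 := by
  intro k
  rw [cassini, cassini, hG (k + 1), show k + 1 + 1 = k + 2 by ring, hG k]
  ring

theorem cassini_sq_eq (hG : ∀ k : ℤ, G (k + 2) = G (k + 1) + G k) (k : ℤ) :
    cassini G k ^ 2 = cassini G 0 ^ 2 := by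
  have hper : Function.Periodic (fun k => cassini G k ^ 2) 1 := fun k => by
    simp only [cassini_antiperiodic hG k, neg_sq]
  simpa using hper.int_mul_eq k

theorem pow_four_sub_mul_eq_cassini_sq (hG : ∀ k : ℤ, G (k + 2) = G (k + 1) + G k) (j : ℤ) :
    G j ^ 4 - G (j - 2) * G (j - 1) * G (j + 1) * G (j + 2) = cassini G (j - 1) ^ 2 := by
  have h₀ : G j = G (j - 1) + G (j - 2) := by
    simpa [show j - 2 + 1 = j - 1 by ring] using hG (j - 2)
  have h₁ : G (j + 1) = G j + G (j - 1) := by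
    simpa [show j - 1 + 2 = j + 1 by ring] using hG (j - 1)
  rw [cassini, sub_add_cancel, show j - 1 + 2 = j + 1 by ring, hG j, h₁, h₀]
  ring

end Gibonacci

theorem gelin_cesaro (G : ℤ → ℤ) (hG : ∀ k : ℤ, G (k + 2) = G (k + 1) + G k) (j : ℤ) :
    G j ^ 4 - G (j - 2) * G (j - 1) * G (j + 1) * G (j + 2) = (G 1 ^ 2 - G 0 * G 2) ^ 2 := by
  rw [Gibonacci.pow_four_sub_mul_eq_cassini_sq hG, Gibonacci.cassini_sq_eq hG]
  simp only [Gibonacci.cassini, zero_add]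
end

section
/- For all integers j and m, F_{m+2}·G_{j+3} + F_{m−3}·G_{j−2} = 5·G_{j+m}. -/
/-! Both sides of `G (j + m) = F m * G (j + 1) + F (m - 1) * G j` are gibonacci in `m` and agree
at `m = 0, 1`, so this addition formula holds everywhere. Writing `F (m + 2)`, `F (m - 3)` in the
basis `F m`, `F (m - 1)` and `G (j + 3)`, `G (j - 2)` in the basis `G (j + 1)`, `G j`, the left-hand
side becomes `5 * (F m * G (j + 1) + F (m - 1) * G j)`. -/

def IsGibonacci {R : Type*} [Add R] (G : ℤ → R) : Prop :=
  ∀ k : ℤ, G (k + 2) = G (k + 1) + G k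

namespace IsGibonacci

variable {R : Type*} [CommRing R] {F G H : ℤ → R}

theorem sub_one (hG : IsGibonacci G) (k : ℤ) : G (k - 1) = G (k + 1) - G k := by
  have h := hG (k - 1)
  rw [sub_add_cancel, show k - 1 + 2 = k + 1 by ring] at h
  rw [h]
  ring

theorem add_three (hG : IsGibonacci G) (k : ℤ) : G (k + 3) = 2 * G (k + 1) + G k := by
  have h := hG (k + 1)
  rw [show k + 1 + 2 = k + 3 by ring, add_assoc, one_add_one_eq_two, hG k] at h
  rw [h]
  ring

theorem sub_two (hG : IsGibonacci G) (k : ℤ) : G (k - 2) = 2 * G k - G (k + 1) := by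
  have h := hG.sub_one (k - 1)
  rw [sub_add_cancel, show k - 1 - 1 = k - 2 by ring, hG.sub_one k] at h
  rw [h]
  ring

theorem sub (hG : IsGibonacci G) (hH : IsGibonacci H) : IsGibonacci (G - H) := fun k => by
  simp only [Pi.sub_apply, hG k, hH k]
  ring

theorem comp_const_add (hG : IsGibonacci G) (j : ℤ) : IsGibonacci (fun k => G (j + k)) :=
  fun k => by simpa only [add_assoc] using hG (j + k)

theorem eq_zero (hG : IsGibonacci G) (h0 : G 0 = 0) (h1 : G 1 = 0) : G = 0 := by
  suffices h : ∀ k : ℤ, G k = 0 ∧ G (k + 1) = 0 from funext fun k => (h k).1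
  intro k
  induction k using Int.induction_on with
  | zero => exact ⟨h0, h1⟩
  | succ k ih => exact ⟨ih.2, by rw [add_assoc, one_add_one_eq_two, hG, ih.1, ih.2, add_zero]⟩
  | pred k ih => exact ⟨by rw [hG.sub_one, ih.1, ih.2, sub_zero], by rw [sub_add_cancel, ih.1]⟩

theorem ext (hG : IsGibonacci G) (hH : IsGibonacci H) (h0 : G 0 = H 0) (h1 : G 1 = H 1) :
    G = H :=
  sub_eq_zero.mp <| (hG.sub hH).eq_zero (sub_eq_zero.mpr h0) (sub_eq_zero.mpr h1)

theorem apply_add (hG : IsGibonacci G) (hF : IsGibonacci F) (hF0 : F 0 = 0) (hF1 : F 1 = 1)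
    (j m : ℤ) : G (j + m) = F m * G (j + 1) + F (m - 1) * G j := by
  have hFneg : F (-1) = 1 := by
    have h := hF.sub_one 0
    rwa [zero_sub, zero_add, hF1, hF0, sub_zero] at h
  have hRHS : IsGibonacci (fun m => F m * G (j + 1) + F (m - 1) * G j) := fun k => by
    dsimp only
    rw [show k + 2 - 1 = k + 1 by ring, add_sub_cancel_right]
    linear_combination G (j + 1) * hF k - G j * hF.sub_one k
  refine congrFun (ext (hG.comp_const_add j) hRHS ?_ ?_) m
  · simp [hF0, hFneg]
  · simp [hF0, hF1]

end IsGibonacci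

theorem howard_special (F : ℤ → ℤ) (hF0 : F 0 = 0) (hF1 : F 1 = 1)
    (hF : ∀ k : ℤ, F (k + 2) = F (k + 1) + F k)
    (G : ℤ → ℤ) (hG : ∀ k : ℤ, G (k + 2) = G (k + 1) + G k) (j m : ℤ) :
    F (m + 2) * G (j + 3) + F (m - 3) * G (j - 2) = 5 * G (j + m) := by
  have hF' : IsGibonacci F := hF
  have hG' : IsGibonacci G := hG
  have hFm2 : F (m + 2) = 2 * F m + F (m - 1) := by
    simpa only [sub_add_cancel, show m - 1 + 3 = m + 2 by ring] using hF'.add_three (m - 1)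
  have hFm3 : F (m - 3) = 2 * F (m - 1) - F m := by
    simpa only [sub_add_cancel, show m - 1 - 2 = m - 3 by ring] using hF'.sub_two (m - 1)
  rw [hFm2, hFm3, hG'.add_three, hG'.sub_two, hG'.apply_add hF' hF0 hF1 j m]
  ring
end

section
/- For every integer j, the fifth powers of a gibonacci sequence satisfy Brousseau's recurrence: G_{j+3}^5 = 8·G_{j+2}^5 + 40·G_{j+1}^5 − 60·G_j^5 − 40·G_{j−1}^5 + 8·G_{j−2}^5 + G_{j−3}^5. -/
theorem brousseau_fifth_power (G : ℤ → ℤ) (hG : ∀ k : ℤ, G (k + 2) = G (k + 1) + G k)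
    (j : ℤ) :
    G (j + 3) ^ 5 =
      8 * G (j + 2) ^ 5 + 40 * G (j + 1) ^ 5 - 60 * G j ^ 5 - 40 * G (j - 1) ^ 5 +
        8 * G (j - 2) ^ 5 + G (j - 3) ^ 5 := by
  have h1 := hG (j - 3); have h2 := hG (j - 2); have h3 := hG (j - 1)
  have h4 := hG j; have h5 := hG (j + 1)
  have e1 : j - 3 + 2 = j - 1 := by ring
  have e2 : j - 3 + 1 = j - 2 := by ring
  have e3 : j - 2 + 2 = j := by ring
  have e4 : j - 2 + 1 = j - 1 := by ring
  have e5 : j - 1 + 2 = j + 1 := by ring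
  have e6 : j - 1 + 1 = j := by ring
  have e7 : j + 1 + 2 = j + 3 := by ring
  have e8 : j + 1 + 1 = j + 2 := by ring
  have e9 : j + 2 = j + 1 + 1 := by ring
  rw [e1, e2] at h1; rw [e3, e4] at h2; rw [e5, e6] at h3
  rw [e9] at h4; rw [e8] at h4
  rw [e7, e8] at h5
  rw [h5, h4, h3, h2, h1]; ring
end

section
/- For every natural number n and every integer t, 44·∑_{j=1}^n G_{j+t}^5 = −(G_{n+t+3}^5 − G_{t+3}^5) + 7·(G_{n+t+2}^5 − G_{t+2}^5) + 47·(G_{n+t+1}^5 − G_{t+1}^5) + 31·(G_{n+t}^5 − G_t^5) − 9·(G_{n+t−1}^5 − G_{t−1}^5) − (G_{n+t−2}^5 − G_{t−2}^5). -/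
lemma gib_step (G : ℤ → ℤ) (hG : ∀ k : ℤ, G (k + 2) = G (k + 1) + G k) (k : ℤ) :
    -(G (k + 3) ^ 5 - G (k + 2) ^ 5) + 7 * (G (k + 2) ^ 5 - G (k + 1) ^ 5) +
      47 * (G (k + 1) ^ 5 - G k ^ 5) + 31 * (G k ^ 5 - G (k - 1) ^ 5) -
      9 * (G (k - 1) ^ 5 - G (k - 2) ^ 5) - (G (k - 2) ^ 5 - G (k - 3) ^ 5) =
    44 * G k ^ 5 := by
  have e1 : G (k - 1) = G (k - 2) + G (k - 3) := by
    simpa [show k - 3 + 2 = k - 1 by ring, show k - 3 + 1 = k - 2 by ring] using hG (k - 3)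
  have e0 : G k = G (k - 1) + G (k - 2) := by
    simpa [show k - 2 + 2 = k by ring, show k - 2 + 1 = k - 1 by ring] using hG (k - 2)
  have e2 : G (k + 1) = G k + G (k - 1) := by
    simpa [show k - 1 + 2 = k + 1 by ring, show k - 1 + 1 = k by ring] using hG (k - 1)
  have e3 : G (k + 2) = G (k + 1) + G k := hG k
  have e4 : G (k + 3) = G (k + 2) + G (k + 1) := by
    simpa [show k + 1 + 2 = k + 3 by ring, show k + 1 + 1 = k + 2 by ring] using hG (k + 1)
  rw [e4, e3, e2, e0, e1]; ring

theorem sum_fifth_powers (G : ℤ → ℤ) (hG : ∀ k : ℤ, G (k + 2) = G (k + 1) + G k)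
    (n : ℕ) (t : ℤ) :
    44 * ∑ j ∈ Finset.Icc 1 n, G ((j : ℤ) + t) ^ 5 =
      -(G ((n : ℤ) + t + 3) ^ 5 - G (t + 3) ^ 5) + 7 * (G ((n : ℤ) + t + 2) ^ 5 - G (t + 2) ^ 5) +
        47 * (G ((n : ℤ) + t + 1) ^ 5 - G (t + 1) ^ 5) + 31 * (G ((n : ℤ) + t) ^ 5 - G t ^ 5) -
        9 * (G ((n : ℤ) + t - 1) ^ 5 - G (t - 1) ^ 5) - (G ((n : ℤ) + t - 2) ^ 5 - G (t - 2) ^ 5) := by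
  induction n with
  | zero => simp
  | succ n ih =>
    rw [Finset.sum_Icc_succ_top (by omega : 1 ≤ n + 1)]
    have hs := gib_step G hG ((n : ℤ) + 1 + t)
    push_cast
    rw [show (n : ℤ) + t + 3 = (n : ℤ) + 1 + t + 2 by ring,
        show (n : ℤ) + t + 2 = (n : ℤ) + 1 + t + 1 by ring,
        show (n : ℤ) + t + 1 = (n : ℤ) + 1 + t by ring,
        show (n : ℤ) + t - 1 = (n : ℤ) + 1 + t - 2 by ring,
        show (n : ℤ) + t - 2 = (n : ℤ) + 1 + t - 3 by ring,
        show (n : ℤ) + t = (n : ℤ) + 1 + t - 1 by ring] at ih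
    linarith [ih, hs]
end

section
/- For every natural number n and every integer t, 44·∑_{j=1}^n (−1)^{j−1}·G_{j+t}^5 = −((−1)^{n+1}·G_{n+t+3}^5 + G_{t+3}^5) + 9·((−1)^{n+1}·G_{n+t+2}^5 + G_{t+2}^5) + 31·((−1)^{n+1}·G_{n+t+1}^5 + G_{t+1}^5) − 47·((−1)^{n+1}·G_{n+t}^5 + G_t^5) + 7·((−1)^{n+1}·G_{n+t−1}^5 + G_{t−1}^5) + ((−1)^{n+1}·G_{n+t−2}^5 + G_{t−2}^5). -/
theorem alt_sum_fifth_powers (G : ℤ → ℤ) (hG : ∀ k : ℤ, G (k + 2) = G (k + 1) + G k)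
    (n : ℕ) (t : ℤ) :
    44 * ∑ j ∈ Finset.Icc 1 n, (-1 : ℤ) ^ (j - 1) * G ((j : ℤ) + t) ^ 5 =
      -((-1 : ℤ) ^ (n + 1) * G ((n : ℤ) + t + 3) ^ 5 + G (t + 3) ^ 5) +
        9 * ((-1 : ℤ) ^ (n + 1) * G ((n : ℤ) + t + 2) ^ 5 + G (t + 2) ^ 5) +
        31 * ((-1 : ℤ) ^ (n + 1) * G ((n : ℤ) + t + 1) ^ 5 + G (t + 1) ^ 5) -
        47 * ((-1 : ℤ) ^ (n + 1) * G ((n : ℤ) + t) ^ 5 + G t ^ 5) +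
        7 * ((-1 : ℤ) ^ (n + 1) * G ((n : ℤ) + t - 1) ^ 5 + G (t - 1) ^ 5) +
        ((-1 : ℤ) ^ (n + 1) * G ((n : ℤ) + t - 2) ^ 5 + G (t - 2) ^ 5) := by
  induction n with
  | zero => simp
  | succ n ih =>
    rw [Finset.sum_Icc_succ_top (by omega : 1 ≤ n + 1), mul_add, ih]
    have h0 : G ((n:ℤ) + t) = G ((n:ℤ) + t - 1) + G ((n:ℤ) + t - 2) := by
      have h := hG ((n:ℤ) + t - 2)
      rw [show (n:ℤ) + t - 2 + 2 = (n:ℤ) + t by ring,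
          show (n:ℤ) + t - 2 + 1 = (n:ℤ) + t - 1 by ring] at h
      exact h
    have h1 : G ((n:ℤ) + t + 1) = G ((n:ℤ) + t) + G ((n:ℤ) + t - 1) := by
      have h := hG ((n:ℤ) + t - 1)
      rw [show (n:ℤ) + t - 1 + 2 = (n:ℤ) + t + 1 by ring,
          show (n:ℤ) + t - 1 + 1 = (n:ℤ) + t by ring] at h
      exact h
    have h2 : G ((n:ℤ) + t + 2) = G ((n:ℤ) + t + 1) + G ((n:ℤ) + t) := by
      have h := hG ((n:ℤ) + t)
      exact h
    have h3 : G ((n:ℤ) + t + 3) = G ((n:ℤ) + t + 2) + G ((n:ℤ) + t + 1) := by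
      have h := hG ((n:ℤ) + t + 1)
      rw [show (n:ℤ) + t + 1 + 2 = (n:ℤ) + t + 3 by ring,
          show (n:ℤ) + t + 1 + 1 = (n:ℤ) + t + 2 by ring] at h
      exact h
    have h4 : G ((n:ℤ) + t + 4) = G ((n:ℤ) + t + 3) + G ((n:ℤ) + t + 2) := by
      have h := hG ((n:ℤ) + t + 2)
      rw [show (n:ℤ) + t + 2 + 2 = (n:ℤ) + t + 4 by ring,
          show (n:ℤ) + t + 2 + 1 = (n:ℤ) + t + 3 by ring] at h
      exact h
    push_cast
    rw [show ((n:ℤ) + 1) + t + 3 = (n:ℤ) + t + 4 by ring,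
        show ((n:ℤ) + 1) + t + 2 = (n:ℤ) + t + 3 by ring,
        show ((n:ℤ) + 1) + t + 1 = (n:ℤ) + t + 2 by ring,
        show ((n:ℤ) + 1) + t = (n:ℤ) + t + 1 by ring,
        show (n:ℤ) + t + 1 - 1 = (n:ℤ) + t by ring,
        show (n:ℤ) + t + 1 - 2 = (n:ℤ) + t - 1 by ring]
    rw [h4, h3, h2, h1, h0]
    simp only [Nat.add_sub_cancel, pow_succ]
    ring
end

section
/- For every natural number n, 44·∑_{j=1}^n F_j^5 = −F_{n+3}^5 + 7·F_{n+2}^5 + 47·F_{n+1}^5 + 31·F_n^5 − 9·F_{n−1}^5 − F_{n−2}^5 − 14. -/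
theorem sum_fib_fifth_powers (F : ℤ → ℤ) (hF0 : F 0 = 0) (hF1 : F 1 = 1)
    (hF : ∀ k : ℤ, F (k + 2) = F (k + 1) + F k) (n : ℕ) :
    44 * ∑ j ∈ Finset.Icc 1 n, F (j : ℤ) ^ 5 =
      -F ((n : ℤ) + 3) ^ 5 + 7 * F ((n : ℤ) + 2) ^ 5 + 47 * F ((n : ℤ) + 1) ^ 5 +
        31 * F (n : ℤ) ^ 5 - 9 * F ((n : ℤ) - 1) ^ 5 - F ((n : ℤ) - 2) ^ 5 - 14 := by
  induction n with
  | zero =>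
    have h2 : F 2 = 1 := by have := hF 0; simpa [hF0, hF1] using this
    have h3 : F 3 = 2 := by have := hF 1; norm_num [hF1, h2] at this; linarith
    have hm1 : F (-1) = 1 := by have := hF (-1); norm_num [hF0, hF1] at this; linarith
    have hm2 : F (-2) = -1 := by have := hF (-2); norm_num [hF0, hm1] at this; linarith
    norm_num [h2, h3, hm1, hm2, hF0, hF1]
  | succ n ih =>
    have e2 : F ((n : ℤ) + 2) = F ((n : ℤ) + 1) + F n := hF n
    have em1 : F ((n : ℤ) - 1) = F ((n : ℤ) + 1) - F n := by
      have := hF ((n : ℤ) - 1)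
      rw [show (n : ℤ) - 1 + 2 = (n : ℤ) + 1 by ring,
        show (n : ℤ) - 1 + 1 = (n : ℤ) by ring] at this; linarith
    have em2 : F ((n : ℤ) - 2) = 2 * F n - F ((n : ℤ) + 1) := by
      have := hF ((n : ℤ) - 2)
      rw [show (n : ℤ) - 2 + 2 = (n : ℤ) by ring,
        show (n : ℤ) - 2 + 1 = (n : ℤ) - 1 by ring] at this; linarith
    have e3 : F ((n : ℤ) + 3) = 2 * F ((n : ℤ) + 1) + F n := by
      have := hF ((n : ℤ) + 1)
      rw [show (n : ℤ) + 1 + 2 = (n : ℤ) + 3 by ring,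
        show (n : ℤ) + 1 + 1 = (n : ℤ) + 2 by ring] at this; linarith
    have e4 : F ((n : ℤ) + 4) = 3 * F ((n : ℤ) + 1) + 2 * F n := by
      have := hF ((n : ℤ) + 2)
      rw [show (n : ℤ) + 2 + 2 = (n : ℤ) + 4 by ring,
        show (n : ℤ) + 2 + 1 = (n : ℤ) + 3 by ring] at this
      rw [e3, e2] at this; linarith
    rw [Finset.sum_Icc_succ_top (by omega : 1 ≤ n + 1)]
    push_cast
    rw [show (n : ℤ) + 1 + 3 = (n : ℤ) + 4 by ring,
      show (n : ℤ) + 1 + 2 = (n : ℤ) + 3 by ring,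
      show (n : ℤ) + 1 + 1 = (n : ℤ) + 2 by ring,
      show (n : ℤ) + 1 - 1 = (n : ℤ) by ring,
      show (n : ℤ) + 1 - 2 = (n : ℤ) - 1 by ring,
      e4, e3, e2, em1]
    rw [e3, e2, em1, em2] at ih
    linear_combination ih
end

section
/- For every natural number n, (−1)^{n−1}·44·∑_{j=1}^n (−1)^{j−1}·F_j^5 = −F_{n+3}^5 + 9·F_{n+2}^5 + 31·F_{n+1}^5 − 47·F_n^5 + 7·F_{n−1}^5 + F_{n−2}^5 + (−1)^{n+1}·14. -/
theorem alt_sum_fib_fifth_powers (F : ℤ → ℤ) (hF0 : F 0 = 0) (hF1 : F 1 = 1)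
    (hF : ∀ k : ℤ, F (k + 2) = F (k + 1) + F k) (n : ℕ) :
    (-1 : ℤ) ^ (n - 1) * 44 * ∑ j ∈ Finset.Icc 1 n, (-1 : ℤ) ^ (j - 1) * F (j : ℤ) ^ 5 =
      -F ((n : ℤ) + 3) ^ 5 + 9 * F ((n : ℤ) + 2) ^ 5 + 31 * F ((n : ℤ) + 1) ^ 5 -
        47 * F (n : ℤ) ^ 5 + 7 * F ((n : ℤ) - 1) ^ 5 + F ((n : ℤ) - 2) ^ 5 +
        (-1 : ℤ) ^ (n + 1) * 14 := by
  have hm1 : F (-1) = 1 := by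
    have h := hF (-1); norm_num at h; omega
  have hm2 : F (-2) = -1 := by
    have h := hF (-2); norm_num at h; omega
  have h2' : F 2 = 1 := by
    have h := hF 0; norm_num at h; omega
  have h3' : F 3 = 2 := by
    have h := hF 1; norm_num at h; omega
  have key : ∀ m : ℕ,
      (-1 : ℤ) ^ m * 44 * ∑ j ∈ Finset.Icc 1 m, (-1 : ℤ) ^ (j - 1) * F (j : ℤ) ^ 5 =
      F ((m : ℤ) + 3) ^ 5 - 9 * F ((m : ℤ) + 2) ^ 5 - 31 * F ((m : ℤ) + 1) ^ 5
        + 47 * F (m : ℤ) ^ 5 - 7 * F ((m : ℤ) - 1) ^ 5 - F ((m : ℤ) - 2) ^ 5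
        + (-1 : ℤ) ^ m * 14 := by
    intro m
    induction m with
    | zero =>
      norm_num [hm1, hm2, h2', h3', hF0, hF1]
    | succ m ih =>
      have h0 : F (m : ℤ) = F ((m : ℤ) - 1) + F ((m : ℤ) - 2) := by
        have h := hF ((m : ℤ) - 2)
        rw [show ((m : ℤ) - 2 + 2) = (m : ℤ) by ring,
            show ((m : ℤ) - 2 + 1) = (m : ℤ) - 1 by ring] at h
        exact h
      have h1 : F ((m : ℤ) + 1) = F (m : ℤ) + F ((m : ℤ) - 1) := by
        have h := hF ((m : ℤ) - 1)
        rw [show ((m : ℤ) - 1 + 2) = (m : ℤ) + 1 by ring,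
            show ((m : ℤ) - 1 + 1) = (m : ℤ) by ring] at h
        exact h
      have h2 : F ((m : ℤ) + 2) = F ((m : ℤ) + 1) + F (m : ℤ) := hF m
      have h3 : F ((m : ℤ) + 3) = F ((m : ℤ) + 2) + F ((m : ℤ) + 1) := by
        have h := hF ((m : ℤ) + 1)
        rw [show ((m : ℤ) + 1 + 2) = (m : ℤ) + 3 by ring] at h
        exact h
      have h4 : F ((m : ℤ) + 4) = F ((m : ℤ) + 3) + F ((m : ℤ) + 2) := by
        have h := hF ((m : ℤ) + 2)
        rw [show ((m : ℤ) + 2 + 2) = (m : ℤ) + 4 by ring,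
            show ((m : ℤ) + 2 + 1) = (m : ℤ) + 3 by ring] at h
        exact h
      have hc2 : ((-1 : ℤ)) ^ m * (-1 : ℤ) ^ m = 1 := by
        rw [← mul_pow]; norm_num
      rw [Finset.sum_Icc_succ_top (by omega : 1 ≤ m + 1)]
      push_cast
      rw [show ((m : ℤ) + 1 + 3) = (m : ℤ) + 4 by ring,
          show ((m : ℤ) + 1 + 2) = (m : ℤ) + 3 by ring,
          show ((m : ℤ) + 1 + 1) = (m : ℤ) + 2 by ring,
          show ((m : ℤ) + 1 - 1) = (m : ℤ) by ring,
          show ((m : ℤ) + 1 - 2) = (m : ℤ) - 1 by ring]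
      rw [h3, h2, h1, h0] at ih
      rw [h4, h3, h2, h1, h0]
      linear_combination (-1 : ℤ) * ih +
        (-44 * (2 * F ((m : ℤ) - 1) + F ((m : ℤ) - 2)) ^ 5) * hc2
  rcases n with _ | n
  · norm_num [hm1, hm2, h2', h3', hF0, hF1]
  · have h := key (n + 1)
    push_cast at h ⊢
    linear_combination (-1 : ℤ) * h
end

section
/- For every natural number n, 44·∑_{j=1}^n F_j·F_{j+1}·F_{j+2}·F_{j+3}·F_{j+4} = −F_{n+5}^5 + 7·F_{n+4}^5 + 47·F_{n+3}^5 + 31·F_{n+2}^5 − 9·F_{n+1}^5 − F_n^5 − 44·F_{n+4} + 30. -/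
theorem sum_fib_products (F : ℤ → ℤ) (hF0 : F 0 = 0) (hF1 : F 1 = 1)
    (hF : ∀ k : ℤ, F (k + 2) = F (k + 1) + F k) (n : ℕ) :
    44 * ∑ j ∈ Finset.Icc 1 n,
        F (j : ℤ) * F ((j : ℤ) + 1) * F ((j : ℤ) + 2) * F ((j : ℤ) + 3) * F ((j : ℤ) + 4) =
      -F ((n : ℤ) + 5) ^ 5 + 7 * F ((n : ℤ) + 4) ^ 5 + 47 * F ((n : ℤ) + 3) ^ 5 +
        31 * F ((n : ℤ) + 2) ^ 5 - 9 * F ((n : ℤ) + 1) ^ 5 - F (n : ℤ) ^ 5 -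
        44 * F ((n : ℤ) + 4) + 30 := by
  have cass : ∀ m : ℕ, (F ((m:ℤ)+1) ^ 2 - F ((m:ℤ)+1) * F (m:ℤ) - F (m:ℤ) ^ 2) ^ 2 = 1 := by
    intro m
    induction m with
    | zero => norm_num [hF0, hF1]
    | succ m ih =>
        push_cast
        have a2 : F ((m:ℤ)+2) = F ((m:ℤ)+1) + F (m:ℤ) := hF m
        rw [show ((m:ℤ)+1+1) = (m:ℤ)+2 by ring, a2]
        linear_combination ih
  have key : ∀ m : ℤ, (F (m+1) ^ 2 - F (m+1) * F m - F m ^ 2) ^ 2 = 1 →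
      44 * (F (m+1) * F (m+2) * F (m+3) * F (m+4) * F (m+5)) =
      (-F (m+6) ^ 5 + 7 * F (m+5) ^ 5 + 47 * F (m+4) ^ 5 +
        31 * F (m+3) ^ 5 - 9 * F (m+2) ^ 5 - F (m+1) ^ 5 - 44 * F (m+5)) -
      (-F (m+5) ^ 5 + 7 * F (m+4) ^ 5 + 47 * F (m+3) ^ 5 +
        31 * F (m+2) ^ 5 - 9 * F (m+1) ^ 5 - F m ^ 5 - 44 * F (m+4)) := by
    intro m hc
    have a2 : F (m+2) = F (m+1) + F m := hF m
    have a3 : F (m+3) = F (m+2) + F (m+1) := by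
      have := hF (m+1); rw [show m+1+2 = m+3 by ring, show m+1+1 = m+2 by ring] at this
      exact this
    have a4 : F (m+4) = F (m+3) + F (m+2) := by
      have := hF (m+2); rw [show m+2+2 = m+4 by ring, show m+2+1 = m+3 by ring] at this
      exact this
    have a5 : F (m+5) = F (m+4) + F (m+3) := by
      have := hF (m+3); rw [show m+3+2 = m+5 by ring, show m+3+1 = m+4 by ring] at this
      exact this
    have a6 : F (m+6) = F (m+5) + F (m+4) := by
      have := hF (m+4); rw [show m+4+2 = m+6 by ring, show m+4+1 = m+5 by ring] at this
      exact this
    rw [a6, a5, a4, a3, a2]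
    linear_combination (-(44 * F m + 88 * F (m+1))) * hc
  induction n with
  | zero =>
      have a2 : F 2 = 1 := by have := hF 0; simp [hF0, hF1] at this; linarith
      have a3 : F 3 = 2 := by have := hF 1; norm_num [hF1, a2] at this; linarith
      have a4 : F 4 = 3 := by have := hF 2; norm_num [a2, a3] at this; linarith
      have a5 : F 5 = 5 := by have := hF 3; norm_num [a3, a4] at this; linarith
      norm_num [hF0, hF1, a2, a3, a4, a5]
  | succ n ih =>
      rw [Finset.sum_Icc_succ_top (by omega : 1 ≤ n + 1)]
      push_cast
      have k := key (n : ℤ) (cass n)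
      rw [show ((n:ℤ)+1+1) = (n:ℤ)+2 by ring, show ((n:ℤ)+1+2) = (n:ℤ)+3 by ring,
        show ((n:ℤ)+1+3) = (n:ℤ)+4 by ring, show ((n:ℤ)+1+4) = (n:ℤ)+5 by ring,
        show ((n:ℤ)+1+5) = (n:ℤ)+6 by ring]
      linarith [ih, k]
end

section
/- For every natural number n, (−1)^{n−1}·44·∑_{j=1}^n (−1)^{j−1}·F_j·F_{j+1}·F_{j+2}·F_{j+3}·F_{j+4} = −F_{n+5}^5 + 9·F_{n+4}^5 + 31·F_{n+3}^5 − 47·F_{n+2}^5 + 7·F_{n+1}^5 + F_n^5 − 44·F_{n+1} + (−1)^n·30. -/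
theorem alt_sum_fib_products (F : ℤ → ℤ) (hF0 : F 0 = 0) (hF1 : F 1 = 1)
    (hF : ∀ k : ℤ, F (k + 2) = F (k + 1) + F k) (n : ℕ) :
    (-1 : ℤ) ^ (n - 1) * 44 * ∑ j ∈ Finset.Icc 1 n,
        (-1 : ℤ) ^ (j - 1) * (F (j : ℤ) * F ((j : ℤ) + 1) * F ((j : ℤ) + 2) * F ((j : ℤ) + 3) *
          F ((j : ℤ) + 4)) =
      -F ((n : ℤ) + 5) ^ 5 + 9 * F ((n : ℤ) + 4) ^ 5 + 31 * F ((n : ℤ) + 3) ^ 5 -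
        47 * F ((n : ℤ) + 2) ^ 5 + 7 * F ((n : ℤ) + 1) ^ 5 + F (n : ℤ) ^ 5 -
        44 * F ((n : ℤ) + 1) + (-1 : ℤ) ^ n * 30 := by
  have v2 : F 2 = 1 := by have h := hF 0; norm_num [hF0, hF1] at h; exact h
  have v3 : F 3 = 2 := by have h := hF 1; norm_num [v2, hF1] at h; exact h
  have v4 : F 4 = 3 := by have h := hF 2; norm_num [v2, v3] at h; exact h
  have v5 : F 5 = 5 := by have h := hF 3; norm_num [v3, v4] at h; exact h
  have v6 : F 6 = 8 := by have h := hF 4; norm_num [v4, v5] at h; exact h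
  have cassini : ∀ m : ℕ, F ((m:ℤ)+1)^2 - F ((m:ℤ)+1) * F (m:ℤ) - F (m:ℤ)^2 = (-1:ℤ)^m := by
    intro m
    induction m with
    | zero => simp [hF0, hF1]
    | succ k ih =>
      have h : F ((k:ℤ)+2) = F ((k:ℤ)+1) + F (k:ℤ) := hF k
      push_cast
      rw [show ((k:ℤ)+1+1) = (k:ℤ)+2 by ring]
      linear_combination (F ((k:ℤ)+2) + F (k:ℤ)) * h - ih
  induction n with
  | zero =>
    norm_num [hF0, hF1, v2, v3, v4, v5]
  | succ m ih =>
    rw [Finset.sum_Icc_succ_top (by omega : 1 ≤ m + 1)]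
    rcases m with _ | k
    · norm_num [hF0, hF1, v2, v3, v4, v5, v6]
    · simp only [Nat.add_sub_cancel] at ih ⊢
      have hC := cassini (k+1)
      push_cast at ih hC ⊢
      have he : ((-1:ℤ)^k)^2 = 1 := by
        rw [← pow_mul, mul_comm, pow_mul]; norm_num
      have h3 : F ((k:ℤ)+3) = F ((k:ℤ)+2) + F ((k:ℤ)+1) := by
        rw [show ((k:ℤ)+3) = (k:ℤ)+1+2 by ring, show ((k:ℤ)+2) = (k:ℤ)+1+1 by ring]; exact hF _
      have h4 : F ((k:ℤ)+4) = F ((k:ℤ)+3) + F ((k:ℤ)+2) := by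
        rw [show ((k:ℤ)+4) = (k:ℤ)+2+2 by ring, show ((k:ℤ)+3) = (k:ℤ)+2+1 by ring]; exact hF _
      have h5 : F ((k:ℤ)+5) = F ((k:ℤ)+4) + F ((k:ℤ)+3) := by
        rw [show ((k:ℤ)+5) = (k:ℤ)+3+2 by ring, show ((k:ℤ)+4) = (k:ℤ)+3+1 by ring]; exact hF _
      have h6 : F ((k:ℤ)+6) = F ((k:ℤ)+5) + F ((k:ℤ)+4) := by
        rw [show ((k:ℤ)+6) = (k:ℤ)+4+2 by ring, show ((k:ℤ)+5) = (k:ℤ)+4+1 by ring]; exact hF _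
      have h7 : F ((k:ℤ)+7) = F ((k:ℤ)+6) + F ((k:ℤ)+5) := by
        rw [show ((k:ℤ)+7) = (k:ℤ)+5+2 by ring, show ((k:ℤ)+6) = (k:ℤ)+5+1 by ring]; exact hF _
      simp only [show ((k:ℤ)+1+1) = (k:ℤ)+2 by ring, show ((k:ℤ)+2+1) = (k:ℤ)+3 by ring,
        show ((k:ℤ)+3+1) = (k:ℤ)+4 by ring, show ((k:ℤ)+4+1) = (k:ℤ)+5 by ring,
        show ((k:ℤ)+5+1) = (k:ℤ)+6 by ring, show ((k:ℤ)+2+2) = (k:ℤ)+4 by ring,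
        show ((k:ℤ)+2+3) = (k:ℤ)+5 by ring, show ((k:ℤ)+2+4) = (k:ℤ)+6 by ring,
        show ((k:ℤ)+2+5) = (k:ℤ)+7 by ring, show ((k:ℤ)+1+2) = (k:ℤ)+3 by ring,
        show ((k:ℤ)+1+3) = (k:ℤ)+4 by ring, show ((k:ℤ)+1+4) = (k:ℤ)+5 by ring,
        show ((k:ℤ)+1+5) = (k:ℤ)+6 by ring] at ih hC ⊢
      rw [h7, h6, h5, h4, h3]
      rw [h6, h5, h4, h3] at ih
      set a := F ((k:ℤ)+1) with ha
      set b := F ((k:ℤ)+2) with hb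
      -- hC : b^2 - b*a - a^2 = (-1)^(k+1)
      linear_combination (-1 : ℤ) * ih +
        (44 * (b*(a+b)*(a+2*b)*(2*a+3*b)*(3*a+5*b)) - (44*a+88*b)) * he -
        ((44*a+88*b) * ((b^2 - a*b - a^2) + (-1:ℤ)^(k+1))) * hC
end

section
/- For every natural number n, 44·∑_{j=1}^n L_j·L_{j+1}·L_{j+2}·L_{j+3}·L_{j+4} = −L_{n+5}^5 + 7·L_{n+4}^5 + 47·L_{n+3}^5 + 31·L_{n+2}^5 − 9·L_{n+1}^5 − L_n^5 − 1100·L_{n+4} − 4518. -/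
theorem lucas_inv (L : ℤ → ℤ) (hL0 : L 0 = 2) (hL1 : L 1 = 1)
    (hL : ∀ k : ℤ, L (k + 2) = L (k + 1) + L k) (n : ℕ) :
    (L ((n : ℤ) + 1) ^ 2 - L ((n : ℤ) + 1) * L (n : ℤ) - L (n : ℤ) ^ 2) ^ 2 = 25 := by
  induction n with
  | zero => norm_num [hL0, hL1]
  | succ n ih =>
    have r2 : L ((n : ℤ) + 2) = L ((n : ℤ) + 1) + L n := hL n
    push_cast
    rw [show (n : ℤ) + 1 + 1 = (n : ℤ) + 2 by ring, r2]
    linear_combination ih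

theorem sum_lucas_products (L : ℤ → ℤ) (hL0 : L 0 = 2) (hL1 : L 1 = 1)
    (hL : ∀ k : ℤ, L (k + 2) = L (k + 1) + L k) (n : ℕ) :
    44 * ∑ j ∈ Finset.Icc 1 n,
        L (j : ℤ) * L ((j : ℤ) + 1) * L ((j : ℤ) + 2) * L ((j : ℤ) + 3) * L ((j : ℤ) + 4) =
      -L ((n : ℤ) + 5) ^ 5 + 7 * L ((n : ℤ) + 4) ^ 5 + 47 * L ((n : ℤ) + 3) ^ 5 +
        31 * L ((n : ℤ) + 2) ^ 5 - 9 * L ((n : ℤ) + 1) ^ 5 - L (n : ℤ) ^ 5 -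
        1100 * L ((n : ℤ) + 4) - 4518 := by
  induction n with
  | zero =>
    have h2 : L 2 = 3 := by have := hL 0; norm_num [hL0, hL1] at this; linarith
    have h3 : L 3 = 4 := by have := hL 1; norm_num [hL1, h2] at this; linarith
    have h4 : L 4 = 7 := by have := hL 2; norm_num [h2, h3] at this; linarith
    have h5 : L 5 = 11 := by have := hL 3; norm_num [h3, h4] at this; linarith
    norm_num [hL0, hL1, h2, h3, h4, h5]
  | succ n ih =>
    rw [Finset.sum_Icc_succ_top (by omega : 1 ≤ n + 1)]
    push_cast
    have e3 := hL ((n : ℤ) + 1)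
    have e4 := hL ((n : ℤ) + 2)
    have e5 := hL ((n : ℤ) + 3)
    have e6 := hL ((n : ℤ) + 4)
    push_cast at ih ⊢
    rw [mul_add, ih]
    have r2 : L ((n : ℤ) + 2) = L ((n : ℤ) + 1) + L n := hL n
    have r3 : L ((n : ℤ) + 3) = L ((n : ℤ) + 2) + L ((n : ℤ) + 1) := by
      rw [show (n : ℤ) + 3 = (n + 1) + 2 by ring, e3]; ring_nf
    have r4 : L ((n : ℤ) + 4) = L ((n : ℤ) + 3) + L ((n : ℤ) + 2) := by
      rw [show (n : ℤ) + 4 = (n + 2) + 2 by ring, e4]; ring_nf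
    have r5 : L ((n : ℤ) + 5) = L ((n : ℤ) + 4) + L ((n : ℤ) + 3) := by
      rw [show (n : ℤ) + 5 = (n + 3) + 2 by ring, e5]; ring_nf
    have r6 : L ((n : ℤ) + 6) = L ((n : ℤ) + 5) + L ((n : ℤ) + 4) := by
      rw [show (n : ℤ) + 6 = (n + 4) + 2 by ring, e6]; ring_nf
    rw [show (n : ℤ) + 1 + 5 = (n : ℤ) + 6 by ring, show (n : ℤ) + 1 + 4 = (n : ℤ) + 5 by ring,
      show (n : ℤ) + 1 + 3 = (n : ℤ) + 4 by ring, show (n : ℤ) + 1 + 2 = (n : ℤ) + 3 by ring,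
      show (n : ℤ) + 1 + 1 = (n : ℤ) + 2 by ring]
    have hc := lucas_inv L hL0 hL1 hL n
    rw [r6, r5, r4, r3, r2]
    linear_combination (-(44:ℤ) * (2 * L ((n : ℤ) + 1) + L (n : ℤ))) * hc
end

section
/- The infinite series ∑_{j=1}^∞ 3^{j−1} / (F_j·F_{j+2}·F_{j+3}·F_{j+4}·F_{j+5}), taken in ℝ over the positive-index Fibonacci numbers, converges and its sum equals 1/150. -/
open Filter Finset

theorem fib_reciprocal_series (F : ℕ → ℕ) (hF0 : F 0 = 0) (hF1 : F 1 = 1)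
    (hF : ∀ k : ℕ, F (k + 2) = F (k + 1) + F k) :
    HasSum
      (fun j : ℕ => (3 : ℝ) ^ j /
        ((F (j + 1) : ℝ) * (F (j + 3) : ℝ) * (F (j + 4) : ℝ) * (F (j + 5) : ℝ) * (F (j + 6) : ℝ)))
      (1 / 150) := by
  have hfib : ∀ n, F n = Nat.fib n := by
    intro n
    induction n using Nat.strong_induction_on with
    | _ n ih =>
      match n with
      | 0 => simpa using hF0
      | 1 => simpa using hF1
      | (k+2) => rw [hF, ih (k+1) (by omega), ih k (by omega), Nat.fib_add_two]; ring
  have hpos : ∀ n, 0 < (F (n+1) : ℝ) := by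
    intro n
    rw [hfib]
    exact_mod_cast Nat.fib_pos.mpr (Nat.succ_pos n)
  have hkey : ∀ j, (F (j+6) : ℝ) = 3 * F (j+1) + 5 * F (j+2) := by
    intro j
    have h0 := hF j
    have h1 : F (j+3) = F (j+2) + F (j+1) := hF (j+1)
    have h2 : F (j+4) = F (j+3) + F (j+2) := hF (j+2)
    have h3 : F (j+5) = F (j+4) + F (j+3) := hF (j+3)
    have h4 : F (j+6) = F (j+5) + F (j+4) := hF (j+4)
    have : F (j+6) = 3 * F (j+1) + 5 * F (j+2) := by omega
    exact_mod_cast this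
  set f : ℕ → ℝ := fun j => (3 : ℝ) ^ j /
        ((F (j + 1) : ℝ) * (F (j + 3) : ℝ) * (F (j + 4) : ℝ) * (F (j + 5) : ℝ) * (F (j + 6) : ℝ))
    with hf
  set g : ℕ → ℝ := fun j => (3 : ℝ) ^ j /
        (5 * (F (j + 1) : ℝ) * (F (j + 2) : ℝ) * (F (j + 3) : ℝ) * (F (j + 4) : ℝ) * (F (j + 5) : ℝ))
    with hg
  have hgpos : ∀ j, 0 < g j := by
    intro j
    apply div_pos (by positivity)
    have := hpos j; have := hpos (j+1); have := hpos (j+2); have := hpos (j+3); have := hpos (j+4)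
    positivity
  have htel : ∀ j, f j = g j - g (j+1) := by
    intro j
    simp only [hf, hg]
    have hA := hpos j; have hB := hpos (j+1); have hC := hpos (j+2)
    have hD := hpos (j+3); have hE := hpos (j+4); have hG := hpos (j+5)
    have hk := hkey j
    show (3:ℝ)^j / (F (j+1) * F (j+3) * F (j+4) * F (j+5) * F (j+6))
      = 3^j / (5 * F (j+1) * F (j+2) * F (j+3) * F (j+4) * F (j+5))
        - 3^(j+1) / (5 * F (j+2) * F (j+3) * F (j+4) * F (j+5) * F (j+6))
    rw [hk]
    field_simp
    ring
  have hpartial : ∀ n, ∑ j ∈ range n, f j = 1/150 - g n := by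
    intro n
    have : ∑ j ∈ range n, f j = ∑ j ∈ range n, (g j - g (j+1)) := by
      exact Finset.sum_congr rfl fun j _ => htel j
    rw [this, Finset.sum_range_sub' g]
    have hg0 : g 0 = 1/150 := by
      simp only [hg]
      rw [hfib 1, hfib 2, hfib 3, hfib 4, hfib 5]
      norm_num [Nat.fib]
    rw [hg0]
  have hbound : ∀ j, g j ≤ (1/150) * (3/8)^j := by
    intro j
    induction j with
    | zero =>
      simp only [pow_zero, mul_one]
      have : g 0 = 1/150 := by linarith [(hpartial 0).symm, Finset.sum_range_zero f]
      linarith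
    | succ n ih =>
      have hA := hpos n; have hB := hpos (n+1); have hC := hpos (n+2)
      have hD := hpos (n+3); have hE := hpos (n+4); have hG := hpos (n+5)
      have hAB : (F (n+1) : ℝ) ≤ F (n+2) := by
        have h0 := hF n
        have : (F (n+2) : ℝ) = F (n+1) + F n := by exact_mod_cast h0
        have h00 : (0:ℝ) ≤ F n := Nat.cast_nonneg _
        linarith
      have h8 : 8 * (F (n+1) : ℝ) ≤ F (n+6) := by
        rw [hkey n]; linarith
      have hstep : g (n+1) ≤ (3/8) * g n := by
        have hden : (40:ℝ) * F (n+1) * F (n+2) * F (n+3) * F (n+4) * F (n+5)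
            ≤ 5 * F (n+2) * F (n+3) * F (n+4) * F (n+5) * F (n+6) := by
          have h1 : (40:ℝ) * F (n+1) * F (n+2) * F (n+3) * F (n+4) * F (n+5)
              = (8 * F (n+1)) * (5 * F (n+2) * F (n+3) * F (n+4) * F (n+5)) := by ring
          have h2 : (5:ℝ) * F (n+2) * F (n+3) * F (n+4) * F (n+5) * F (n+6)
              = (F (n+6) : ℝ) * (5 * F (n+2) * F (n+3) * F (n+4) * F (n+5)) := by ring
          rw [h1, h2]
          exact mul_le_mul_of_nonneg_right h8 (by positivity)
        have heq : (3/8) * g n = 3^(n+1) / (40 * F (n+1) * F (n+2) * F (n+3) * F (n+4) * F (n+5)) := by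
          simp only [hg]
          field_simp
          ring
        rw [heq]
        show (3:ℝ)^(n+1) / (5 * F (n+2) * F (n+3) * F (n+4) * F (n+5) * F (n+6))
          ≤ 3^(n+1) / (40 * F (n+1) * F (n+2) * F (n+3) * F (n+4) * F (n+5))
        apply div_le_div_of_nonneg_left (by positivity) (by positivity) hden
      calc g (n+1) ≤ (3/8) * g n := hstep
        _ ≤ (3/8) * ((1/150) * (3/8)^n) := by linarith [hgpos n]
        _ = (1/150) * (3/8)^(n+1) := by ring
  have hgtend : Tendsto g atTop (nhds 0) := by
    have h0 : Tendsto (fun j : ℕ => (1/150 : ℝ) * (3/8)^j) atTop (nhds 0) := by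
      have := tendsto_pow_atTop_nhds_zero_of_lt_one (by norm_num : (0:ℝ) ≤ 3/8) (by norm_num : (3/8:ℝ) < 1)
      simpa using this.const_mul (1/150 : ℝ)
    exact squeeze_zero (fun j => (hgpos j).le) hbound h0
  have hfn : ∀ j, 0 ≤ f j := by
    intro j
    have hA := hpos j; have hC := hpos (j+2); have hD := hpos (j+3)
    have hE := hpos (j+4); have hG := hpos (j+5)
    simp only [hf]
    positivity
  rw [hasSum_iff_tendsto_nat_of_nonneg hfn]
  have : (fun n => ∑ j ∈ range n, f j) = fun n => 1/150 - g n := funext hpartial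
  rw [this]
  simpa using tendsto_const_nhds.sub hgtend
end
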